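/- arXiv:2212.03225 — 3 statements merged into one kernel-verified Lean document; each statement's English description precedes it below -/
import Mathlib

section
/- Let P be symmetric positive definite and A real n×n with PA + AᵀP negative definite. Then all eigenvalues of A have strictly negative real part (A is Hurwitz). -/
/-!
If `A v = μ v` with `v ≠ 0`, then `v* (P A + Aᴴ P) v = 2 Re μ · v* P v`; the left side is
negative and `v* P v` is positive, so `Re μ < 0`. For real `A` and `P` the eigenvector is complex,
so the argument is run for the complexified matrices, which stay positive definite.
-/

open Matrix
open scoped ComplexOrder

namespace Matrix

variable {n : Type*} [Fintype n]

theorem exists_mulVec_eq_smul_of_mem_spectrum {K : Type*} [Field K] [DecidableEq n]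
    {A : Matrix n n K} {μ : K} (hμ : μ ∈ spectrum K A) : ∃ v ≠ 0, A *ᵥ v = μ • v := by
  rw [← spectrum_toLin', ← Module.End.hasEigenvalue_iff_mem_spectrum] at hμ
  obtain ⟨v, hv⟩ := hμ.exists_hasEigenvector
  exact ⟨v, hv.2, Module.End.mem_eigenspace_iff.mp hv.1⟩

theorem PosSemidef.map_ofReal {P : Matrix n n ℝ} (hP : P.PosSemidef) :
    (P.map ((↑) : ℝ → ℂ)).PosSemidef := by
  classical
  obtain ⟨B, rfl⟩ : ∃ B : Matrix n n ℝ, P = star B * B := by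
    open scoped MatrixOrder Matrix.Norms.L2Operator in
    exact CStarAlgebra.nonneg_iff_eq_star_mul_self.mp hP.nonneg
  have hB : (star B).map ((↑) : ℝ → ℂ) = (B.map (↑))ᴴ :=
    conjTranspose_map _ fun x => (Complex.conj_ofReal x).symm
  have hBB : (star B * B).map ((↑) : ℝ → ℂ) = (B.map (↑))ᴴ * B.map (↑) := by
    rw [← hB]; exact Matrix.map_mul (f := Complex.ofRealHom)
  rw [hBB]
  exact posSemidef_conjTranspose_mul_self _

theorem PosDef.map_ofReal [DecidableEq n] {P : Matrix n n ℝ} (hP : P.PosDef) :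
    (P.map ((↑) : ℝ → ℂ)).PosDef :=
  hP.posSemidef.map_ofReal.posDef_iff_det_ne_zero.mpr <| by
    refine (Complex.ofRealHom.map_det P).symm.trans_ne ?_
    exact Complex.ofReal_ne_zero.mpr hP.det_pos.ne'

variable {𝕜 : Type*} [RCLike 𝕜]

theorem dotProduct_mul_add_conjTranspose_mul_mulVec_of_mulVec_eq_smul {A P : Matrix n n 𝕜}
    {μ : 𝕜} {v : n → 𝕜} (hv : A *ᵥ v = μ • v) :
    star v ⬝ᵥ (P * A + Aᴴ * P) *ᵥ v = ((2 * RCLike.re μ : ℝ) : 𝕜) * (star v ⬝ᵥ P *ᵥ v) := by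
  have hAv : star v ᵥ* Aᴴ = star (μ • v) := by rw [vecMul_conjTranspose, star_star, hv]
  rw [add_mulVec, dotProduct_add, ← mulVec_mulVec, ← mulVec_mulVec, hv, mulVec_smul,
    dotProduct_mulVec (star v) Aᴴ, hAv, star_smul]
  simp only [smul_dotProduct, dotProduct_smul, smul_eq_mul]
  rw [← add_mul, RCLike.star_def, RCLike.add_conj]
  push_cast; rfl

theorem re_lt_zero_of_mem_spectrum_of_lyapunov [DecidableEq n] {A P : Matrix n n 𝕜} (hP : P.PosDef)
    (hL : (-(P * A + Aᴴ * P)).PosDef) {μ : 𝕜} (hμ : μ ∈ spectrum 𝕜 A) : RCLike.re μ < 0 := by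
  obtain ⟨v, hv0, hv⟩ := exists_mulVec_eq_smul_of_mem_spectrum hμ
  have hPv := hP.re_dotProduct_pos hv0
  have hLv := hL.re_dotProduct_pos hv0
  rw [neg_mulVec, dotProduct_neg,
    dotProduct_mul_add_conjTranspose_mul_mulVec_of_mulVec_eq_smul hv, map_neg, RCLike.re_ofReal_mul] at hLv
  nlinarith

end Matrix

theorem lyapunov_implies_hurwitz (n : ℕ) (A P : Matrix (Fin n) (Fin n) ℝ)
    (hP : P.PosDef) (hL : (-(P * A + Aᵀ * P)).PosDef) :
    ∀ μ ∈ spectrum ℂ (A.map (Complex.ofReal)), μ.re < 0 := by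
  intro μ hμ
  refine re_lt_zero_of_mem_spectrum_of_lyapunov hP.map_ofReal ?_ hμ
  have hLc : (-(P * A + Aᵀ * P)).map ((↑) : ℝ → ℂ) =
      -(P.map (↑) * A.map (↑) + (A.map (↑))ᴴ * P.map (↑)) := by
    ext i j
    simp [mul_apply]
  exact hLc ▸ hL.map_ofReal
end

section
/- Lemma 2 of the paper: Let W ∈ ℝ^{n×n} be symmetric positive definite, R ∈ ℝ^{n×n} invertible, F ∈ ℝ^{m×n}, K = FR⁻¹, and β > 0. If the block matrix [[βI, F],[Fᵀ, (W⁻¹R)ᵀ + W⁻¹R − I]] is positive semidefinite, then the spectral norm of KW is at most √β. -/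
/-!
Write `X = W⁻¹R`. By the Schur complement of the block `βI`, the hypothesis says
`FᵀF ≤ β (Xᵀ + X - I)` in the Loewner order, and Young's relation `Xᵀ + X - I ≤ XᵀX`
(equivalently `(X - I)ᵀ(X - I) ≥ 0`) turns this into `FᵀF ≤ β XᵀX`. Conjugating by
`X⁻¹ = R⁻¹W` gives `(KW)ᵀ(KW) ≤ β I`, which is the bound `‖KW‖ ≤ √β`.
-/

open Matrix

noncomputable def specNorm {m n : ℕ} (M : Matrix (Fin m) (Fin n) ℝ) : ℝ :=
  ‖LinearMap.toContinuousLinearMap (Matrix.toEuclideanLin M)‖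

open scoped MatrixOrder ComplexOrder

namespace Matrix

variable {m n 𝕜 : Type*} [RCLike 𝕜] [Fintype m] [Fintype n] [DecidableEq n]

theorem conjTranspose_add_sub_one_le_conjTranspose_mul_self (X : Matrix n n 𝕜) :
    Xᴴ + X - 1 ≤ Xᴴ * X := by
  rw [le_iff]
  convert posSemidef_conjTranspose_mul_self (X - 1) using 1
  simp only [conjTranspose_sub, conjTranspose_one, Matrix.sub_mul, Matrix.mul_sub,
    Matrix.mul_one, Matrix.one_mul]
  abel

theorem conjTranspose_mul_self_le_of_fromBlocks_posSemidef [DecidableEq m] {β : ℝ} (hβ : 0 < β)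
    {F : Matrix m n 𝕜} {D : Matrix n n 𝕜} (h : (fromBlocks (β • 1) F Fᴴ D).PosSemidef) :
    Fᴴ * F ≤ β • D := by
  have hA : (β • 1 : Matrix m m 𝕜).PosDef := PosDef.one.smul hβ
  have : Invertible (β • 1 : Matrix m m 𝕜) := hA.isUnit.invertible
  have hinv : (β • 1 : Matrix m m 𝕜)⁻¹ = β⁻¹ • 1 :=
    inv_eq_left_inv <| by rw [smul_mul_smul_comm, inv_mul_cancel₀ hβ.ne', Matrix.one_mul, one_smul]
  rw [PosDef.fromBlocks₁₁ F D hA, ← le_iff, hinv, Matrix.mul_smul, Matrix.mul_one,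
    Matrix.smul_mul] at h
  simpa [smul_smul, hβ.ne'] using smul_le_smul_of_nonneg_left h hβ.le

theorem conjTranspose_mul_self_le_smul_one_of_mul_eq_one {β : ℝ} {F : Matrix m n 𝕜}
    {X Y : Matrix n n 𝕜} (hF : Fᴴ * F ≤ β • (Xᴴ * X)) (hXY : X * Y = 1) :
    (F * Y)ᴴ * (F * Y) ≤ β • 1 := by
  calc (F * Y)ᴴ * (F * Y) = star Y * (Fᴴ * F) * Y := by
        rw [star_eq_conjTranspose, conjTranspose_mul, Matrix.mul_assoc, Matrix.mul_assoc,
          Matrix.mul_assoc]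
    _ ≤ star Y * (β • (Xᴴ * X)) * Y := star_left_conjugate_le_conjugate hF Y
    _ = β • ((X * Y)ᴴ * (X * Y)) := by
        rw [star_eq_conjTranspose, Matrix.mul_smul, Matrix.smul_mul, conjTranspose_mul,
          Matrix.mul_assoc, Matrix.mul_assoc, Matrix.mul_assoc]
    _ = β • 1 := by rw [hXY, conjTranspose_one, Matrix.one_mul]

end Matrix

theorem EuclideanSpace.real_norm_sq_eq_dotProduct {ι : Type*} [Fintype ι]
    (x : EuclideanSpace ℝ ι) : ‖x‖ ^ 2 = x.ofLp ⬝ᵥ x.ofLp := by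
  rw [← real_inner_self_eq_norm_sq, EuclideanSpace.inner_eq_star_dotProduct, star_trivial]

theorem specNorm_le_sqrt_of_transpose_mul_self_le {m n : ℕ} {M : Matrix (Fin m) (Fin n) ℝ}
    {c : ℝ} (hM : Mᵀ * M ≤ c • 1) : specNorm M ≤ √c := by
  refine ContinuousLinearMap.opNorm_le_bound _ (Real.sqrt_nonneg c) fun x => ?_
  have hquad : (M *ᵥ x.ofLp) ⬝ᵥ (M *ᵥ x.ofLp) ≤ c * (x.ofLp ⬝ᵥ x.ofLp) := by
    have := (le_iff.mp hM).dotProduct_mulVec_nonneg x.ofLp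
    rwa [star_trivial, sub_mulVec, dotProduct_sub, sub_nonneg, ← mulVec_mulVec,
      dotProduct_mulVec, vecMul_transpose, smul_mulVec, one_mulVec, dotProduct_smul,
      smul_eq_mul] at this
  rw [← Real.sqrt_sq (norm_nonneg x), ← Real.sqrt_mul' _ (sq_nonneg _)]
  refine Real.le_sqrt_of_sq_le ?_
  rw [EuclideanSpace.real_norm_sq_eq_dotProduct, EuclideanSpace.real_norm_sq_eq_dotProduct]
  exact hquad

theorem lemma2 (m n : ℕ) (W R : Matrix (Fin n) (Fin n) ℝ) (hW : W.PosDef) (hR : IsUnit R)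
    (F : Matrix (Fin m) (Fin n) ℝ) (K : Matrix (Fin m) (Fin n) ℝ) (hK : K = F * R⁻¹)
    (β : ℝ) (hβ : 0 < β)
    (h : (Matrix.fromBlocks (β • (1 : Matrix (Fin m) (Fin m) ℝ)) F Fᵀ
          ((W⁻¹ * R)ᵀ + W⁻¹ * R - 1)).PosSemidef) :
    specNorm (K * W) ≤ Real.sqrt β := by
  set X := W⁻¹ * R
  have hXinv : X * (R⁻¹ * W) = 1 := by
    rw [← Matrix.mul_assoc, mul_nonsing_inv_cancel_right _ _ ((isUnit_iff_isUnit_det R).mp hR),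
      nonsing_inv_mul _ ((isUnit_iff_isUnit_det W).mp hW.isUnit)]
  rw [← conjTranspose_eq_transpose_of_trivial F, ← conjTranspose_eq_transpose_of_trivial X] at h
  have hFX : Fᴴ * F ≤ β • (Xᴴ * X) :=
    (conjTranspose_mul_self_le_of_fromBlocks_posSemidef hβ h).trans
      (smul_le_smul_of_nonneg_left (conjTranspose_add_sub_one_le_conjTranspose_mul_self X) hβ.le)
  have hKW : K * W = F * (R⁻¹ * W) := by rw [hK, Matrix.mul_assoc]
  apply specNorm_le_sqrt_of_transpose_mul_self_le
  rw [← conjTranspose_eq_transpose_of_trivial, hKW]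
  exact conjTranspose_mul_self_le_smul_one_of_mul_eq_one hFX hXinv
end

section
/- Lemma 3 of the paper: Let W ∈ ℝ^{n×n} symmetric positive definite, R₀ ∈ ℝ^{n×n} symmetric positive definite, R ∈ ℝ^{n×n} invertible, F ∈ ℝ^{m×n}, K = FR⁻¹, β > 0, and define T₁ = (W⁻¹R)ᵀ(W⁻¹R₀) + (W⁻¹R₀)ᵀ(W⁻¹R) − (W⁻¹R₀)ᵀ(W⁻¹R₀). If [[βI, F],[Fᵀ, T₁]] is positive semidefinite, then the spectral norm of KW is at most √β. -/
/-!
Write `A = W⁻¹R`, `B = W⁻¹R₀` and `C = R⁻¹W`, so that `AC = 1` and `KW = FC`. Expanding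
`(A - B)ᴴ(A - B) ≥ 0` shows `T₁ ≤ AᴴA`, and the Schur complement of the block `βI` gives
`FᴴF ≤ β T₁`. Conjugating by `C`, `(KW)ᴴ(KW) = Cᴴ FᴴF C ≤ β (AC)ᴴ(AC) = β`, which bounds the
operator norm of `KW` by `√β`.
-/

open Matrix

open scoped ComplexOrder MatrixOrder

namespace Matrix

variable {𝕜 : Type*} [RCLike 𝕜] {m n : Type*} [Fintype m] [Fintype n]

theorem conjTranspose_mul_add_sub_le_conjTranspose_mul_self (A B : Matrix m n 𝕜) :
    Aᴴ * B + Bᴴ * A - Bᴴ * B ≤ Aᴴ * A := by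
  rw [le_iff]
  convert posSemidef_conjTranspose_mul_self (A - B) using 1
  simp only [conjTranspose_sub, Matrix.sub_mul, Matrix.mul_sub]
  abel

theorem conjTranspose_mul_self_le_smul_of_posSemidef_fromBlocks [DecidableEq m] {β : ℝ}
    (hβ : 0 < β) (F : Matrix m n 𝕜) (T : Matrix n n 𝕜)
    (h : (fromBlocks (β • 1) F Fᴴ T).PosSemidef) : Fᴴ * F ≤ β • T := by
  have hβ1 : (β • 1 : Matrix m m 𝕜).PosDef := PosDef.one.smul hβ
  have : Invertible (β • 1 : Matrix m m 𝕜) := hβ1.isUnit.invertible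
  have hinv : (β • 1 : Matrix m m 𝕜)⁻¹ = β⁻¹ • 1 :=
    inv_eq_left_inv (by rw [smul_mul_smul, Matrix.one_mul, inv_mul_cancel₀ hβ.ne', one_smul])
  have hscale : β • T - Fᴴ * F = β • (T - Fᴴ * (β⁻¹ • (1 : Matrix m m 𝕜)) * F) := by
    rw [smul_sub, Matrix.mul_smul, Matrix.smul_mul, Matrix.mul_one, smul_smul,
      mul_inv_cancel₀ hβ.ne', one_smul]
  rw [PosDef.fromBlocks₁₁ F T hβ1, hinv] at h
  rw [le_iff, hscale]
  exact h.smul hβ.le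

theorem norm_toEuclideanLin_apply_sq_le [DecidableEq n] (M : Matrix m n 𝕜)
    {β : ℝ} (h : Mᴴ * M ≤ β • 1) (x : EuclideanSpace 𝕜 n) :
    ‖toEuclideanLin M x‖ ^ 2 ≤ β * ‖x‖ ^ 2 := by
  classical
  have hpos := (isPositive_toEuclideanLin_iff.2 (le_iff.1 h)).re_inner_nonneg_left x
  rw [RCLike.real_smul_eq_coe_smul (K := 𝕜), map_sub, map_smul, toLpLin_one, toLpLin_mul_same,
    toEuclideanLin_conjTranspose_eq_adjoint] at hpos
  simpa [inner_sub_left, LinearMap.adjoint_inner_left, inner_smul_left_eq_smul,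
    RCLike.smul_re] using hpos

theorem norm_toEuclideanLin_le_sqrt_of_conjTranspose_mul_self_le [DecidableEq n]
    (M : Matrix m n 𝕜) {β : ℝ} (hβ : 0 ≤ β) (h : Mᴴ * M ≤ β • 1) :
    ‖LinearMap.toContinuousLinearMap (toEuclideanLin M)‖ ≤ √β := by
  refine ContinuousLinearMap.opNorm_le_bound _ (Real.sqrt_nonneg β) fun x => ?_
  rw [← Real.sqrt_sq (norm_nonneg x), ← Real.sqrt_mul hβ]
  exact Real.le_sqrt_of_sq_le (norm_toEuclideanLin_apply_sq_le M h x)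

end Matrix

theorem lemma3_general (m n : ℕ) (W R₀ R : Matrix (Fin n) (Fin n) ℝ)
    (hW : W.PosDef) (hR : IsUnit R)
    (F : Matrix (Fin m) (Fin n) ℝ) (K : Matrix (Fin m) (Fin n) ℝ) (hK : K = F * R⁻¹)
    (β : ℝ) (hβ : 0 < β)
    (h : (Matrix.fromBlocks (β • (1 : Matrix (Fin m) (Fin m) ℝ)) F Fᵀ
          ((W⁻¹ * R)ᵀ * (W⁻¹ * R₀) + (W⁻¹ * R₀)ᵀ * (W⁻¹ * R)
            - (W⁻¹ * R₀)ᵀ * (W⁻¹ * R₀))).PosSemidef) :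
    specNorm (K * W) ≤ Real.sqrt β := by
  set A := W⁻¹ * R
  set C := R⁻¹ * W
  have hAC : A * C = 1 := by
    rw [Matrix.mul_assoc, mul_nonsing_inv_cancel_left _ _ ((isUnit_iff_isUnit_det R).mp hR),
      nonsing_inv_mul _ ((isUnit_iff_isUnit_det W).mp hW.isUnit)]
  simp only [← conjTranspose_eq_transpose_of_trivial] at h
  have hF : Fᴴ * F ≤ β • (Aᴴ * A) :=
    (conjTranspose_mul_self_le_smul_of_posSemidef_fromBlocks hβ F _ h).trans
      (smul_le_smul_of_nonneg_left
        (conjTranspose_mul_add_sub_le_conjTranspose_mul_self A _) hβ.le)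
  have hKW : (K * W)ᴴ * (K * W) ≤ β • 1 :=
    calc (K * W)ᴴ * (K * W) = star C * (Fᴴ * F) * C := by
          rw [hK, Matrix.mul_assoc, star_eq_conjTranspose, conjTranspose_mul]
          simp only [Matrix.mul_assoc]
          rfl
      _ ≤ star C * (β • (Aᴴ * A)) * C := star_left_conjugate_le_conjugate hF C
      _ = β • 1 := by
          rw [Matrix.mul_smul, Matrix.smul_mul, star_eq_conjTranspose, Matrix.mul_assoc,
            Matrix.mul_assoc Aᴴ, ← Matrix.mul_assoc Cᴴ, ← conjTranspose_mul, hAC,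
            conjTranspose_one, Matrix.one_mul]
  exact norm_toEuclideanLin_le_sqrt_of_conjTranspose_mul_self_le _ hβ.le hKW

theorem lemma3 (m n : ℕ) (W R₀ R : Matrix (Fin n) (Fin n) ℝ)
    (hW : W.PosDef) (hR₀ : R₀.PosDef) (hR : IsUnit R)
    (F : Matrix (Fin m) (Fin n) ℝ) (K : Matrix (Fin m) (Fin n) ℝ) (hK : K = F * R⁻¹)
    (β : ℝ) (hβ : 0 < β)
    (h : (Matrix.fromBlocks (β • (1 : Matrix (Fin m) (Fin m) ℝ)) F Fᵀ
          ((W⁻¹ * R)ᵀ * (W⁻¹ * R₀) + (W⁻¹ * R₀)ᵀ * (W⁻¹ * R)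
            - (W⁻¹ * R₀)ᵀ * (W⁻¹ * R₀))).PosSemidef) :
    specNorm (K * W) ≤ Real.sqrt β :=
  lemma3_general m n W R₀ R hW hR F K hK β hβ h
end
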